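/- arXiv:2110.11493 — 3 statements merged into one kernel-verified Lean document; each statement's English description precedes it below -/
import Mathlib

section
/- Let P be an operator EDP set in the L×L grid graph and let V_c be its set of crossing vertices. Then in the subgraph of the grid induced by V_c, every vertex has degree at most 2, and moreover each vertex of degree 2 has its two neighbors in V_c either both horizontal neighbors ((i-1,j) and (i+1,j)) or both vertical neighbors ((i,j-1) and (i,j+1)). Consequently every connected component of the induced subgraph is an isolated vertex, a horizontal path, or a vertical path. -/
/-- Adjacency relation of the `L × L` grid graph: vertices are pairs of
coordinates in `[1, L]`, adjacent when they differ by one in exactly one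
coordinate. -/
def GridAdj (L : ℕ) (u v : ℕ × ℕ) : Prop :=
  u.1 ∈ Finset.Icc 1 L ∧ u.2 ∈ Finset.Icc 1 L ∧
    v.1 ∈ Finset.Icc 1 L ∧ v.2 ∈ Finset.Icc 1 L ∧
    ((u.1 = v.1 ∧ (u.2 + 1 = v.2 ∨ v.2 + 1 = u.2)) ∨
      (u.2 = v.2 ∧ (u.1 + 1 = v.1 ∨ v.1 + 1 = u.1)))

/-- A simple path in the `L × L` grid graph, given as its list of vertices. -/
def IsGridPath (L : ℕ) (p : List (ℕ × ℕ)) : Prop :=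
  2 ≤ p.length ∧ p.Nodup ∧ p.Chain' (GridAdj L)

/-- A vertex is black (a data qubit) when both coordinates are even. -/
def Black (v : ℕ × ℕ) : Prop := Even v.1 ∧ Even v.2

/-- The (undirected) edges traversed by a path given as a list of vertices. -/
def pathEdges (p : List (ℕ × ℕ)) : List (Sym2 (ℕ × ℕ)) :=
  (p.zip p.tail).map fun e => s(e.1, e.2)

/-- An operator path: a grid path whose endpoints are black and whose interior
vertices are all non-black. -/
def IsOperatorPath (L : ℕ) (p : List (ℕ × ℕ)) : Prop :=
  IsGridPath L p ∧
    (∀ v, p.head? = some v → Black v) ∧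
    (∀ v, p.getLast? = some v → Black v) ∧
    ∀ v ∈ p.tail.dropLast, ¬Black v

/-- An operator EDP set: a set of pairwise edge-disjoint operator paths,
no two of which share an endpoint. -/
def IsOperatorEDPSet (L : ℕ) (P : Set (List (ℕ × ℕ))) : Prop :=
  (∀ p ∈ P, IsOperatorPath L p) ∧
    (P.Pairwise fun p q => ∀ e ∈ pathEdges p, e ∉ pathEdges q) ∧
    (P.Pairwise fun p q => ∀ v : ℕ × ℕ,
      (p.head? = some v ∨ p.getLast? = some v) →
      ¬(q.head? = some v ∨ q.getLast? = some v))

/-- A crossing vertex of a set of paths: a vertex contained in more than one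
path of the set. -/
def IsCrossing (P : Set (List (ℕ × ℕ))) (v : ℕ × ℕ) : Prop :=
  ∃ p ∈ P, ∃ q ∈ P, p ≠ q ∧ v ∈ p ∧ v ∈ q

namespace CrossingAux

lemma gridAdj_symm {L : ℕ} {u v : ℕ × ℕ} (h : GridAdj L u v) : GridAdj L v u := by
  obtain ⟨a, b, c, d, e⟩ := h
  exact ⟨c, d, a, b, by tauto⟩

lemma gridAdj_mem_nbhd {L : ℕ} {a w : ℕ × ℕ} (h : GridAdj L a w) :
    w ∈ ({(a.1 - 1, a.2), (a.1 + 1, a.2), (a.1, a.2 - 1), (a.1, a.2 + 1)} :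
      Finset (ℕ × ℕ)) := by
  obtain ⟨x, y⟩ := a
  obtain ⟨z, t⟩ := w
  obtain ⟨_, _, _, _, h⟩ := h
  simp only [Finset.mem_insert, Finset.mem_singleton, Prod.mk.injEq] at *
  omega

lemma pathEdges_len (p : List (ℕ × ℕ)) : (pathEdges p).length = p.length - 1 := by
  simp [pathEdges, List.length_zip, List.length_tail]

lemma edge_mem_pathEdges (p : List (ℕ × ℕ)) {i : ℕ} (h : i + 1 < p.length) :
    s(p[i]'(by omega), p[i+1]'h) ∈ pathEdges p := by
  have hz : i < (p.zip p.tail).length := by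
    simp [List.length_zip, List.length_tail]; omega
  refine List.mem_map.2 ⟨(p.zip p.tail)[i], List.getElem_mem hz, ?_⟩
  rw [List.getElem_zip]
  simp [List.getElem_tail]

lemma mem_pathEdges {p : List (ℕ × ℕ)} {e : Sym2 (ℕ × ℕ)} (he : e ∈ pathEdges p) :
    ∃ i, ∃ h : i + 1 < p.length, e = s(p[i]'(by omega), p[i+1]'h) := by
  obtain ⟨a, ha, rfl⟩ := List.mem_map.1 he
  obtain ⟨i, hi, rfl⟩ := List.mem_iff_getElem.1 ha
  have h : i + 1 < p.length := by
    simp [List.length_zip, List.length_tail] at hi; omega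
  refine ⟨i, h, ?_⟩
  rw [List.getElem_zip]
  simp [List.getElem_tail]


lemma gec {α : Type*} (l : List α) {i j : ℕ} (h : i = j) (hj : j < l.length) :
    l[i]'(by omega) = l[j]'hj := by subst h; rfl

lemma not_black_interior {L : ℕ} {p : List (ℕ × ℕ)} (hp : IsOperatorPath L p)
    {k : ℕ} (h0 : 0 < k) (h1 : k + 1 < p.length) : ¬ Black (p[k]'(by omega)) := by
  apply hp.2.2.2
  have hlen : k - 1 < p.tail.dropLast.length := by
    simp [List.length_dropLast, List.length_tail]; omega
  have : p.tail.dropLast[k-1]'hlen = p[k]'(by omega) := by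
    rw [List.getElem_dropLast, List.getElem_tail]
    simp only [show k - 1 + 1 = k from by omega]
  rw [← this]
  exact List.getElem_mem hlen

lemma head?_getElem {p : List (ℕ × ℕ)} (h : 0 < p.length) :
    p.head? = some (p[0]'h) := by
  rw [List.head?_eq_getElem?, List.getElem?_eq_getElem]

lemma getLast?_getElem {p : List (ℕ × ℕ)} (h : 0 < p.length) :
    p.getLast? = some (p[p.length - 1]'(by omega)) := by
  rw [List.getLast?_eq_getElem?, List.getElem?_eq_getElem]

/-- trichotomy: a vertex of an operator path is an endpoint (hence black) or interior. -/
lemma mem_cases {L : ℕ} {p : List (ℕ × ℕ)} (hp : IsOperatorPath L p)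
    {v : ℕ × ℕ} (hv : v ∈ p) :
    ((p.head? = some v ∨ p.getLast? = some v) ∧ Black v) ∨
      ∃ k, ∃ h : k + 1 < p.length, 0 < k ∧ p[k]'(by omega) = v := by
  obtain ⟨k, hk, rfl⟩ := List.mem_iff_getElem.1 hv
  have hlen : 2 ≤ p.length := hp.1.1
  by_cases h0 : k = 0
  · subst h0
    have := head?_getElem (p := p) (by omega)
    exact Or.inl ⟨Or.inl this, hp.2.1 _ this⟩
  · by_cases hl : k = p.length - 1
    · subst hl
      have := getLast?_getElem (p := p) (by omega)
      exact Or.inl ⟨Or.inr this, hp.2.2.1 _ this⟩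
    · exact Or.inr ⟨k, by omega, by omega, rfl⟩

lemma black_endpoint {L : ℕ} {p : List (ℕ × ℕ)} (hp : IsOperatorPath L p)
    {v : ℕ × ℕ} (hv : v ∈ p) (hb : Black v) :
    p.head? = some v ∨ p.getLast? = some v := by
  rcases mem_cases hp hv with h | ⟨k, h, h0, rfl⟩
  · exact h.1
  · exact absurd hb (not_black_interior hp h0 h)

lemma crossing_not_black {L : ℕ} {P : Set (List (ℕ × ℕ))}
    (hP : IsOperatorEDPSet L P) {v : ℕ × ℕ} (hv : IsCrossing P v) : ¬ Black v := by
  obtain ⟨p, hpP, q, hqP, hpq, hvp, hvq⟩ := hv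
  intro hb
  exact hP.2.2 hpP hqP hpq v (black_endpoint (hP.1 p hpP) hvp hb)
    (black_endpoint (hP.1 q hqP) hvq hb)

lemma crossing_interior {L : ℕ} {p : List (ℕ × ℕ)} (hp : IsOperatorPath L p)
    {v : ℕ × ℕ} (hv : v ∈ p) (hnb : ¬ Black v) :
    ∃ k, ∃ h : k + 1 < p.length, 0 < k ∧ p[k]'(by omega) = v := by
  rcases mem_cases hp hv with h | h
  · exact absurd h.2 hnb
  · exact h

/-- a black vertex of an operator path meets a unique edge of the path. -/
lemma black_unique_nbr {L : ℕ} {p : List (ℕ × ℕ)} (hp : IsOperatorPath L p)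
    {b w1 w2 : ℕ × ℕ} (hb : Black b)
    (h1 : s(w1, b) ∈ pathEdges p) (h2 : s(w2, b) ∈ pathEdges p) : w1 = w2 := by
  have hnd := hp.1.2.1
  have hlen : 2 ≤ p.length := hp.1.1
  have key : ∀ w : ℕ × ℕ, s(w, b) ∈ pathEdges p →
      (∃ h : 1 < p.length, b = p[0]'(by omega) ∧ w = p[1]'h) ∨
      (∃ h : 2 ≤ p.length, b = p[p.length - 1]'(by omega) ∧ w = p[p.length - 2]'(by omega)) := by
    intro w hw
    obtain ⟨i, h, he⟩ := mem_pathEdges hw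
    rcases Sym2.eq_iff.1 he with ⟨hwi, hbi⟩ | ⟨hwi, hbi⟩
    · -- w = p[i], b = p[i+1]
      have : i + 1 = p.length - 1 := by
        by_contra hc
        exact not_black_interior hp (k := i + 1) (by omega) (by omega) (hbi ▸ hb)
      right
      exact ⟨hlen, hbi.trans (gec p (by omega) _), hwi.trans (gec p (by omega) _)⟩
    · -- w = p[i+1], b = p[i]
      have : i = 0 := by
        by_contra hc
        exact not_black_interior hp (k := i) (by omega) (by omega) (hbi ▸ hb)
      left
      exact ⟨by omega, hbi.trans (gec p (by omega) _), hwi.trans (gec p (by omega) _)⟩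
  rcases key w1 h1 with ⟨_, hb1, hw1⟩ | ⟨_, hb1, hw1⟩ <;>
    rcases key w2 h2 with ⟨_, hb2, hw2⟩ | ⟨_, hb2, hw2⟩
  · rw [hw1, hw2]
  · exfalso
    have : (0 : ℕ) = p.length - 1 := hnd.getElem_inj_iff.1 (hb1.symm.trans hb2)
    omega
  · exfalso
    have : p.length - 1 = 0 := hnd.getElem_inj_iff.1 (hb1.symm.trans hb2)
    omega
  · rw [hw1, hw2]

lemma mem_of_edge {p : List (ℕ × ℕ)} {x y : ℕ × ℕ} (h : s(x, y) ∈ pathEdges p) :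
    x ∈ p ∧ y ∈ p := by
  obtain ⟨i, hi, he⟩ := mem_pathEdges h
  rcases Sym2.eq_iff.1 he with ⟨hx, hy⟩ | ⟨hx, hy⟩ <;>
    exact ⟨hx ▸ List.getElem_mem _, hy ▸ List.getElem_mem _⟩


lemma card4_le {a b c d : ℕ × ℕ} : ({a, b, c, d} : Finset (ℕ × ℕ)).card ≤ 4 := by
  have h1 := Finset.card_insert_le a ({b, c, d} : Finset (ℕ × ℕ))
  have h2 := Finset.card_insert_le b ({c, d} : Finset (ℕ × ℕ))
  have h3 := Finset.card_insert_le c ({d} : Finset (ℕ × ℕ))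
  have h4 : ({d} : Finset (ℕ × ℕ)).card = 1 := Finset.card_singleton d
  omega

lemma all_edges_used {L : ℕ} {P : Set (List (ℕ × ℕ))} (hP : IsOperatorEDPSet L P)
    {u : ℕ × ℕ} (hu : IsCrossing P u) :
    ∀ w, GridAdj L u w → ∃ r ∈ P, s(u, w) ∈ pathEdges r := by
  obtain ⟨p, hpP, q, hqP, hpq, hup, huq⟩ := hu
  have hnb := crossing_not_black hP ⟨p, hpP, q, hqP, hpq, hup, huq⟩
  obtain ⟨k, hk, hk0, hku⟩ := crossing_interior (hP.1 p hpP) hup hnb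
  obtain ⟨j, hj, hj0, hju⟩ := crossing_interior (hP.1 q hqP) huq hnb
  have hndp := (hP.1 p hpP).1.2.1
  have hndq := (hP.1 q hqP).1.2.1
  -- the four edges at u
  have e1 : s(p[k-1]'(by omega), u) ∈ pathEdges p := by
    have h' := edge_mem_pathEdges p (i := k - 1) (show k - 1 + 1 < p.length by omega)
    simp only [show k - 1 + 1 = k from by omega, hku] at h'
    exact h'
  have e2 : s(u, p[k+1]'hk) ∈ pathEdges p := by
    have h' := edge_mem_pathEdges p (i := k) hk
    simp only [hku] at h'
    exact h'
  have f1 : s(q[j-1]'(by omega), u) ∈ pathEdges q := by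
    have h' := edge_mem_pathEdges q (i := j - 1) (show j - 1 + 1 < q.length by omega)
    simp only [show j - 1 + 1 = j from by omega, hju] at h'
    exact h'
  have f2 : s(u, q[j+1]'hj) ∈ pathEdges q := by
    have h' := edge_mem_pathEdges q (i := j) hj
    simp only [hju] at h'
    exact h'
  -- adjacency of the four neighbours to u
  have a1 : GridAdj L u (p[k-1]'(by omega)) := by
    have h' := List.isChain_iff_getElem.1 (hP.1 p hpP).1.2.2 (k - 1) (by omega)
    simp only [List.get_eq_getElem, show k - 1 + 1 = k from by omega, hku] at h'
    exact gridAdj_symm h'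
  have a2 : GridAdj L u (p[k+1]'hk) := by
    have h' := List.isChain_iff_getElem.1 (hP.1 p hpP).1.2.2 k (by omega)
    simp only [List.get_eq_getElem, hku] at h'
    exact h'
  have a3 : GridAdj L u (q[j-1]'(by omega)) := by
    have h' := List.isChain_iff_getElem.1 (hP.1 q hqP).1.2.2 (j - 1) (by omega)
    simp only [List.get_eq_getElem, show j - 1 + 1 = j from by omega, hju] at h'
    exact gridAdj_symm h'
  have a4 : GridAdj L u (q[j+1]'hj) := by
    have h' := List.isChain_iff_getElem.1 (hP.1 q hqP).1.2.2 j (by omega)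
    simp only [List.get_eq_getElem, hju] at h'
    exact h'
  -- pairwise distinctness of the four neighbours
  have hed := hP.2.1 hpP hqP hpq
  have hw12 : p[k-1]'(by omega) ≠ p[k+1]'hk := by
    intro h; have := hndp.getElem_inj_iff.1 h; omega
  have hw34 : q[j-1]'(by omega) ≠ q[j+1]'hj := by
    intro h; have := hndq.getElem_inj_iff.1 h; omega
  have hw13 : p[k-1]'(by omega) ≠ q[j-1]'(by omega) := by
    intro h; exact hed _ e1 (by rw [h]; exact f1)
  have hw14 : p[k-1]'(by omega) ≠ q[j+1]'hj := by
    intro h; exact hed _ e1 (by rw [h, Sym2.eq_swap]; exact f2)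
  have hw23 : p[k+1]'hk ≠ q[j-1]'(by omega) := by
    intro h; exact hed _ e2 (by rw [h, Sym2.eq_swap]; exact f1)
  have hw24 : p[k+1]'hk ≠ q[j+1]'hj := by
    intro h; exact hed _ e2 (by rw [h]; exact f2)
  -- the four neighbours exhaust the grid neighbourhood of u
  have hsub : ({p[k-1]'(by omega), p[k+1]'hk, q[j-1]'(by omega), q[j+1]'hj} :
      Finset (ℕ × ℕ)) ⊆
      ({(u.1 - 1, u.2), (u.1 + 1, u.2), (u.1, u.2 - 1), (u.1, u.2 + 1)} :
        Finset (ℕ × ℕ)) := by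
    intro x hx
    simp only [Finset.mem_insert, Finset.mem_singleton] at hx
    rcases hx with rfl | rfl | rfl | rfl
    · exact gridAdj_mem_nbhd a1
    · exact gridAdj_mem_nbhd a2
    · exact gridAdj_mem_nbhd a3
    · exact gridAdj_mem_nbhd a4
  have hcard : ({p[k-1]'(by omega), p[k+1]'hk, q[j-1]'(by omega), q[j+1]'hj} :
      Finset (ℕ × ℕ)).card = 4 := by
    rw [Finset.card_insert_of_notMem (by simp [hw12, hw13, hw14]),
      Finset.card_insert_of_notMem (by simp [hw23, hw24]),
      Finset.card_insert_of_notMem (by simp [hw34]), Finset.card_singleton]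
  have heq := Finset.eq_of_subset_of_card_le hsub (by rw [hcard]; exact card4_le)
  intro w hw
  have hwN := gridAdj_mem_nbhd hw
  rw [← heq] at hwN
  simp only [Finset.mem_insert, Finset.mem_singleton] at hwN
  rcases hwN with rfl | rfl | rfl | rfl
  · exact ⟨p, hpP, by rw [Sym2.eq_swap]; exact e1⟩
  · exact ⟨p, hpP, e2⟩
  · exact ⟨q, hqP, by rw [Sym2.eq_swap]; exact f1⟩
  · exact ⟨q, hqP, f2⟩


lemma noHV {L : ℕ} {P : Set (List (ℕ × ℕ))} (hP : IsOperatorEDPSet L P)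
    {v u1 u2 : ℕ × ℕ} (ho1 : v.1 % 2 = 1) (ho2 : v.2 % 2 = 1)
    (hu1 : IsCrossing P u1) (ha1 : GridAdj L v u1) (hH : u1.2 = v.2)
    (hu2 : IsCrossing P u2) (ha2 : GridAdj L v u2) (hV : u2.1 = v.1) : False := by
  obtain ⟨h1, h2, h3, h4, hadj1⟩ := ha1
  obtain ⟨_, _, h5, h6, hadj2⟩ := ha2
  have hd1 : v.1 + 1 = u1.1 ∨ u1.1 + 1 = v.1 := by
    rcases hadj1 with ⟨hx, hy⟩ | ⟨hx, hy⟩ <;> omega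
  have hd2 : v.2 + 1 = u2.2 ∨ u2.2 + 1 = v.2 := by
    rcases hadj2 with ⟨hx, hy⟩ | ⟨hx, hy⟩ <;> omega
  have hb : Black (u1.1, u2.2) := by
    constructor
    · exact Nat.even_iff.2 (by simp only []; omega)
    · exact Nat.even_iff.2 (by simp only []; omega)
  have hA1 : GridAdj L u1 (u1.1, u2.2) := ⟨h3, h4, h3, h6, Or.inl ⟨rfl, by omega⟩⟩
  have hA2 : GridAdj L u2 (u1.1, u2.2) := ⟨h5, h6, h3, h6, Or.inr ⟨rfl, by omega⟩⟩
  obtain ⟨r1, hr1, he1⟩ := all_edges_used hP hu1 _ hA1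
  obtain ⟨r2, hr2, he2⟩ := all_edges_used hP hu2 _ hA2
  have hne : u1 ≠ u2 := by
    intro h
    rw [Prod.ext_iff] at h
    omega
  by_cases hr : r1 = r2
  · subst hr
    exact hne (black_unique_nbr (hP.1 r1 hr1) hb he1 he2)
  · exact hP.2.2 hr1 hr2 hr _
      (black_endpoint (hP.1 r1 hr1) (mem_of_edge he1).2 hb)
      (black_endpoint (hP.1 r2 hr2) (mem_of_edge he2).2 hb)

end CrossingAux

open CrossingAux

/-- Let `P` be an operator EDP set in the `L × L` grid graph and
`V_c` its set of crossing vertices.  In the subgraph of the grid induced on `V_c`,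
every vertex has degree at most 2, and the neighbors (in `V_c`) of any crossing
vertex `(i, j)` are either all among the horizontal neighbors `(i-1, j), (i+1, j)`
or all among the vertical neighbors `(i, j-1), (i, j+1)`.  Consequently every
connected component of the induced subgraph is an isolated vertex, a horizontal
path, or a vertical path. -/
theorem crossing_adjacency (L : ℕ) (P : Set (List (ℕ × ℕ)))
    (hP : IsOperatorEDPSet L P) :
    ∀ v : ℕ × ℕ, IsCrossing P v →
      ({u : ℕ × ℕ | IsCrossing P u ∧ GridAdj L v u}.ncard ≤ 2 ∧
        ({u : ℕ × ℕ | IsCrossing P u ∧ GridAdj L v u} ⊆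
            {(v.1 - 1, v.2), (v.1 + 1, v.2)} ∨
          {u : ℕ × ℕ | IsCrossing P u ∧ GridAdj L v u} ⊆
            {(v.1, v.2 - 1), (v.1, v.2 + 1)})) := by
  intro v hv
  have hvb := crossing_not_black hP hv
  have hsplit : ({u : ℕ × ℕ | IsCrossing P u ∧ GridAdj L v u} ⊆
      {(v.1 - 1, v.2), (v.1 + 1, v.2)} ∨
      {u : ℕ × ℕ | IsCrossing P u ∧ GridAdj L v u} ⊆
      {(v.1, v.2 - 1), (v.1, v.2 + 1)}) := by
    rcases Nat.even_or_odd v.1 with he1 | ho1 <;>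
      rcases Nat.even_or_odd v.2 with he2 | ho2
    · exact absurd ⟨he1, he2⟩ hvb
    · -- v grey, vertical neighbours black: crossing neighbours horizontal
      left
      rintro u ⟨huc, hua⟩
      obtain ⟨_, _, _, _, hadj⟩ := hua
      rcases hadj with ⟨hx, hy⟩ | ⟨hx, hy⟩
      · exfalso
        apply crossing_not_black hP huc
        refine ⟨hx ▸ he1, Nat.even_iff.2 ?_⟩
        have := Nat.odd_iff.1 ho2
        omega
      · simp only [Set.mem_insert_iff, Set.mem_singleton_iff, Prod.ext_iff]
        omega
    · -- v grey, horizontal neighbours black: crossing neighbours vertical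
      right
      rintro u ⟨huc, hua⟩
      obtain ⟨_, _, _, _, hadj⟩ := hua
      rcases hadj with ⟨hx, hy⟩ | ⟨hx, hy⟩
      · simp only [Set.mem_insert_iff, Set.mem_singleton_iff, Prod.ext_iff]
        omega
      · exfalso
        apply crossing_not_black hP huc
        refine ⟨Nat.even_iff.2 ?_, hx ▸ he2⟩
        have := Nat.odd_iff.1 ho1
        omega
    · -- v white
      have ho1' := Nat.odd_iff.1 ho1
      have ho2' := Nat.odd_iff.1 ho2
      by_cases hex : ∃ u : ℕ × ℕ, (IsCrossing P u ∧ GridAdj L v u) ∧ u.2 = v.2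
      · left
        obtain ⟨u, ⟨huc, hua⟩, huH⟩ := hex
        rintro w ⟨hwc, hwa⟩
        have hadj := hwa.2.2.2.2
        rcases hadj with ⟨hx, hy⟩ | ⟨hx, hy⟩
        · exact absurd (noHV hP ho1' ho2' huc hua huH hwc hwa hx.symm) not_false
        · simp only [Set.mem_insert_iff, Set.mem_singleton_iff, Prod.ext_iff]
          omega
      · right
        rintro w ⟨hwc, hwa⟩
        have hadj := hwa.2.2.2.2
        rcases hadj with ⟨hx, hy⟩ | ⟨hx, hy⟩
        · simp only [Set.mem_insert_iff, Set.mem_singleton_iff, Prod.ext_iff]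
          omega
        · exact absurd ⟨w, ⟨hwc, hwa⟩, hx.symm⟩ hex
  have pairbound : ∀ a b : ℕ × ℕ, ({a, b} : Set (ℕ × ℕ)).ncard ≤ 2 := fun a b =>
    (Set.ncard_insert_le a {b}).trans (by simp)
  refine ⟨?_, hsplit⟩
  rcases hsplit with h | h
  · exact (Set.ncard_le_ncard h (Set.toFinite _)).trans (pairbound _ _)
  · exact (Set.ncard_le_ncard h (Set.toFinite _)).trans (pairbound _ _)
end

section
/- Every operator EDP set P in the grid graph can be fragmented into two sets P_1 and P_2 of subpaths (segments) such that each path of P is the concatenation of segments from P_1 ∪ P_2, each segment belongs to exactly one path of P, and both P_1 and P_2 are vertex-disjoint path sets. If P itself is vertex-disjoint, one may take P_1 = P and P_2 = ∅. -/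
/-- A set of paths is vertex-disjoint when no two distinct members share a
vertex. -/
def IsVDPSet (P : Set (List (ℕ × ℕ))) : Prop :=
  P.Pairwise fun p q => ∀ v : ℕ × ℕ, v ∈ p → v ∉ q

/-!
At a crossing `v` of two paths, both pass through `v` as interior vertices, so together they use
all four grid edges at `v`, and exactly one of them uses the edge to the left of `v`. Colouring a
path at `v` by a reference bit at `v` xor "uses the left edge" therefore separates the two paths.
The reference bits are transported along the edges joining crossings (horizontally where possible,
otherwise from below) so that a path keeps its colour along such an edge. This is consistent
because three corners of a unit square are never all crossings: one corner is black, and a black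
vertex is the endpoint of at most one path, so it cannot be a neighbour of two crossings.

Label every edge of a path by the colour of the path at a crossing endpoint and cut the path into
maximal runs of equal labels. Distinct runs of one path with the same label do not touch; runs of
different paths can meet only at a crossing, where their labels are the two different colours.
-/

namespace List

theorem pair_infix_of_lt {α : Type*} {l : List α} {j : ℕ} (hj : j + 1 < l.length) :
    [l[j], l[j + 1]] <:+: l := by
  refine ⟨l.take j, l.drop (j + 2), ?_⟩
  conv_rhs => rw [← take_append_drop j l, drop_eq_getElem_cons (by omega),
    drop_eq_getElem_cons (by omega)]
  simp

variable {α β : Type*} (l : List α) (f : ℕ → β)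

/-- Breakpoints of an edge labelling `f` of a path `l` (edge `j` joins `l[j]` and `l[j+1]`). -/
def IsRunBreak (j : ℕ) : Prop := j = 0 ∨ l.length ≤ j + 1 ∨ f (j - 1) ≠ f j

theorem exists_isRunBreak_gt (i : ℕ) : ∃ j, i < j ∧ IsRunBreak l f j :=
  ⟨i + l.length + 1, by omega, Or.inr (Or.inl (by omega))⟩

variable [DecidableEq β]

instance : DecidablePred (IsRunBreak l f) := fun _ => by unfold IsRunBreak; infer_instance

def runStart (i : ℕ) : ℕ := Nat.findGreatest (IsRunBreak l f) i

def runStop (i : ℕ) : ℕ := Nat.find (exists_isRunBreak_gt l f i)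

/-- The segment through edge `i`: the maximal run of equally labelled edges containing it. -/
def run (i : ℕ) : List α := (l.drop (l.runStart f i)).take (l.runStop f i + 1 - l.runStart f i)

theorem runStart_le (i : ℕ) : l.runStart f i ≤ i := Nat.findGreatest_le i

theorem lt_runStop (i : ℕ) : i < l.runStop f i := (Nat.find_spec (exists_isRunBreak_gt l f i)).1

variable {l f} {i : ℕ}

theorem isRunBreak_runStart : l.IsRunBreak f (l.runStart f i) :=
  Nat.findGreatest_spec (Nat.zero_le i) (Or.inl rfl)

theorem isRunBreak_runStop : l.IsRunBreak f (l.runStop f i) :=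
  (Nat.find_spec (exists_isRunBreak_gt l f i)).2

theorem runStop_lt (hi : i + 1 < l.length) : l.runStop f i < l.length :=
  (Nat.find_min' _ ⟨(by omega : i < l.length - 1), Or.inr (Or.inl (by omega))⟩).trans_lt
    (by omega)

theorem not_isRunBreak {j : ℕ} (h₁ : l.runStart f i < j) (h₂ : j < l.runStop f i) :
    ¬l.IsRunBreak f j := by
  rcases le_or_gt j i with h | h
  · exact Nat.findGreatest_is_greatest h₁ h
  · exact fun hj => Nat.find_min _ h₂ ⟨h, hj⟩

theorem apply_eq_of_mem_Ico {j : ℕ} (hj : j ∈ Set.Ico (l.runStart f i) (l.runStop f i)) :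
    f j = f i := by
  have key : ∀ k, l.runStart f i ≤ k → k < l.runStop f i → f k = f (l.runStart f i) := by
    refine Nat.le_induction (fun _ => rfl) fun k hk ih hk₁ => ?_
    rw [← ih (by omega)]
    by_contra hne
    exact not_isRunBreak (by omega) hk₁ (Or.inr (Or.inr (by simpa using Ne.symm hne)))
  rw [key j hj.1 hj.2, key i (runStart_le l f i) (lt_runStop l f i)]

theorem length_run (hi : i + 1 < l.length) :
    (l.run f i).length = l.runStop f i + 1 - l.runStart f i := by
  have := runStop_lt (f := f) hi
  simp only [run, length_take, length_drop]
  omega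

theorem getElem_run {t : ℕ} (ht : t < (l.run f i).length) :
    (l.run f i)[t] = l[l.runStart f i + t]'(by simp [run] at ht; omega) := by
  simp only [run, getElem_take, getElem_drop]

theorem run_infix : l.run f i <:+: l :=
  (take_prefix _ _).isInfix.trans (drop_suffix _ _).isInfix

theorem two_le_length_run (hi : i + 1 < l.length) : 2 ≤ (l.run f i).length := by
  have := lt_runStop l f i
  have := runStart_le l f i
  rw [length_run hi]
  omega

theorem pair_infix_run (hi : i + 1 < l.length) : [l[i], l[i + 1]] <:+: l.run f i := by
  have hlen := length_run (f := f) hi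
  have := lt_runStop l f i
  have := runStart_le l f i
  have h := pair_infix_of_lt (l := l.run f i) (j := i - l.runStart f i) (by omega)
  simp only [getElem_run] at h
  convert h using 3 <;> congr 1 <;> omega

theorem exists_getElem_eq_of_mem_run (hi : i + 1 < l.length) {v : α} (hv : v ∈ l.run f i) :
    ∃ t, ∃ ht : t < l.length, t ∈ Set.Icc (l.runStart f i) (l.runStop f i) ∧ l[t] = v := by
  obtain ⟨t, ht, rfl⟩ := mem_iff_getElem.1 hv
  have := length_run (f := f) hi
  exact ⟨_, _, ⟨by omega, by omega⟩, (getElem_run ht).symm⟩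

theorem exists_edge_of_mem_run (hi : i + 1 < l.length) {v : α} (hv : v ∈ l.run f i) :
    ∃ j, ∃ hj : j + 1 < l.length, f j = f i ∧ (l[j] = v ∨ l[j + 1] = v) := by
  obtain ⟨t, ht, ⟨h₁, h₂⟩, rfl⟩ := exists_getElem_eq_of_mem_run hi hv
  have := runStart_le l f i
  have := lt_runStop l f i
  have := runStop_lt (f := f) hi
  rcases lt_or_eq_of_le h₂ with h | rfl
  · exact ⟨t, by omega, apply_eq_of_mem_Ico ⟨h₁, h⟩, Or.inl rfl⟩
  · refine ⟨l.runStop f i - 1, by omega,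
      apply_eq_of_mem_Ico (l := l) (f := f) ⟨by omega, by omega⟩, Or.inr ?_⟩
    congr 1
    omega

theorem runStop_eq_of_runStart_eq {i' : ℕ} (h : l.runStart f i = l.runStart f i') :
    l.runStop f i = l.runStop f i' := by
  have h₁ := lt_runStop l f i
  have h₂ := lt_runStop l f i'
  have h₃ := runStart_le l f i
  have h₄ := runStart_le l f i'
  rcases lt_trichotomy (l.runStop f i) (l.runStop f i') with hlt | heq | hlt
  · exact absurd isRunBreak_runStop (not_isRunBreak (by omega) hlt)
  · exact heq
  · exact absurd isRunBreak_runStop (not_isRunBreak (by omega) hlt)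

theorem apply_ne_of_runStart_lt {i' : ℕ} (hi' : i' + 1 < l.length)
    (hlt : l.runStart f i < l.runStart f i') (hle : l.runStart f i' ≤ l.runStop f i) :
    f i ≠ f i' := by
  have := lt_runStop l f i
  have := runStart_le l f i'
  have := lt_runStop l f i'
  have hbreak := isRunBreak_runStart (l := l) (f := f) (i := i')
  obtain heq : l.runStart f i' = l.runStop f i := by
    by_contra hne
    exact not_isRunBreak hlt (lt_of_le_of_ne hle hne) hbreak
  rcases hbreak with h | h | h
  · omega
  · omega
  · rwa [apply_eq_of_mem_Ico (l := l) (f := f) (i := i) ⟨by omega, by omega⟩,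
      apply_eq_of_mem_Ico (l := l) (f := f) (i := i') ⟨le_rfl, by omega⟩] at h

theorem run_eq_of_mem_of_mem (hl : l.Nodup) {i' : ℕ} (hi : i + 1 < l.length)
    (hi' : i' + 1 < l.length) (hf : f i = f i') {v : α} (hv : v ∈ l.run f i)
    (hv' : v ∈ l.run f i') : l.run f i = l.run f i' := by
  obtain ⟨t, ht, ⟨h₁, h₂⟩, rfl⟩ := exists_getElem_eq_of_mem_run hi hv
  obtain ⟨t', ht', ⟨h₁', h₂'⟩, htt⟩ := exists_getElem_eq_of_mem_run hi' hv'
  obtain rfl : t' = t := hl.getElem_inj_iff.1 htt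
  suffices hs : l.runStart f i = l.runStart f i' by
    simp only [run, hs, runStop_eq_of_runStart_eq hs]
  by_contra hne
  rcases lt_or_gt_of_ne hne with h | h
  · exact apply_ne_of_runStart_lt hi' h (by omega) hf
  · exact apply_ne_of_runStart_lt hi h (by omega) hf.symm

end List

theorem mem_pathEdges_iff {p : List (ℕ × ℕ)} {e : Sym2 (ℕ × ℕ)} :
    e ∈ pathEdges p ↔ ∃ i, ∃ h : i + 1 < p.length, e = s(p[i], p[i + 1]) := by
  rw [pathEdges, List.mem_map]
  simp only [List.mem_iff_getElem (l := p.zip p.tail), List.getElem_zip, List.getElem_tail,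
    List.length_zip, List.length_tail]
  constructor
  · rintro ⟨_, ⟨i, hi, rfl⟩, rfl⟩
    exact ⟨i, by omega, rfl⟩
  · rintro ⟨i, hi, rfl⟩
    exact ⟨_, ⟨i, by omega, rfl⟩, rfl⟩

theorem mem_pathEdges_of_infix {p : List (ℕ × ℕ)} {a b : ℕ × ℕ} (h : [a, b] <:+: p) :
    s(a, b) ∈ pathEdges p := by
  obtain ⟨l, r, rfl⟩ := h
  refine mem_pathEdges_iff.2 ⟨l.length, by simp, ?_⟩
  simp [List.getElem_append_right]

theorem getElem_mem_pathEdges {p : List (ℕ × ℕ)} {i : ℕ} (hi : i + 1 < p.length) :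
    s(p[i], p[i + 1]) ∈ pathEdges p :=
  mem_pathEdges_of_infix (List.pair_infix_of_lt hi)

theorem mem_of_mem_pathEdges {p : List (ℕ × ℕ)} {a b : ℕ × ℕ} (h : s(a, b) ∈ pathEdges p) :
    a ∈ p := by
  obtain ⟨i, hi, he⟩ := mem_pathEdges_iff.1 h
  have ha := he ▸ Sym2.mem_mk_left a b
  rcases Sym2.mem_iff.1 ha with rfl | rfl <;> exact List.getElem_mem _

theorem exists_interior_of_mem_pathEdges {p : List (ℕ × ℕ)} (hp : p.Nodup) {v a b : ℕ × ℕ}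
    (ha : s(v, a) ∈ pathEdges p) (hb : s(v, b) ∈ pathEdges p) (hab : a ≠ b) :
    ∃ t, ∃ ht : t + 1 < p.length, 0 < t ∧ p[t] = v := by
  obtain ⟨i, hi, hi'⟩ := mem_pathEdges_iff.1 ha
  obtain ⟨j, hj, hj'⟩ := mem_pathEdges_iff.1 hb
  have inj {m n : ℕ} (hm : m < p.length) (hn : n < p.length) (h : p[m] = p[n]) : m = n :=
    hp.getElem_inj_iff.1 h
  rw [Sym2.eq_iff] at hi' hj'
  rcases hi' with ⟨hvi, rfl⟩ | ⟨hvi, rfl⟩ <;> rcases hj' with ⟨hvj, rfl⟩ | ⟨hvj, rfl⟩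
  · obtain rfl := inj _ _ (hvi.symm.trans hvj); exact absurd rfl hab
  · obtain rfl := inj _ _ (hvi.symm.trans hvj); exact ⟨j + 1, hi, by omega, hvj.symm⟩
  · obtain rfl := inj _ _ (hvi.symm.trans hvj); exact ⟨i + 1, hj, by omega, hvi.symm⟩
  · obtain rfl : i = j := by have := inj _ _ (hvi.symm.trans hvj); omega
    exact absurd rfl hab

namespace IsOperatorPath

variable {L : ℕ} {p : List (ℕ × ℕ)} (hp : IsOperatorPath L p)
include hp

theorem two_le_length : 2 ≤ p.length := hp.1.1

theorem black_getElem_iff {t : ℕ} (ht : t < p.length) : Black p[t] ↔ t = 0 ∨ t + 1 = p.length := by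
  constructor
  · intro hb
    by_contra! h
    refine hp.2.2.2 _ (List.mem_iff_getElem.2 ⟨t - 1, by simp; omega, ?_⟩) hb
    simp only [List.getElem_dropLast, List.getElem_tail]
    congr 1
    omega
  · rintro (rfl | h)
    · exact hp.2.1 _ (List.head?_eq_getElem?.trans (List.getElem?_eq_getElem ht))
    · refine hp.2.2.1 _ (List.getLast?_eq_getElem?.trans ?_)
      rw [List.getElem?_eq_getElem (by omega)]
      congr 2
      omega

theorem black_iff_isEndpoint {v : ℕ × ℕ} (hv : v ∈ p) :
    Black v ↔ p.head? = some v ∨ p.getLast? = some v := by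
  obtain ⟨t, ht, rfl⟩ := List.mem_iff_getElem.1 hv
  simp only [hp.black_getElem_iff ht, List.head?_eq_getElem?, List.getLast?_eq_getElem?,
    List.getElem?_eq_some_iff, hp.1.2.1.getElem_inj_iff, exists_prop]
  omega

end IsOperatorPath

theorem gridAdj_comm {L : ℕ} {u v : ℕ × ℕ} : GridAdj L u v ↔ GridAdj L v u := by
  unfold GridAdj
  constructor <;> rintro ⟨h₁, h₂, h₃, h₄, h₅⟩ <;> exact ⟨h₃, h₄, h₁, h₂, by omega⟩

def gridNbrs (v : ℕ × ℕ) : Finset (ℕ × ℕ) :=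
  {(v.1 + 1, v.2), (v.1 - 1, v.2), (v.1, v.2 + 1), (v.1, v.2 - 1)}

theorem mem_gridNbrs_of_gridAdj {L : ℕ} {u v : ℕ × ℕ} (h : GridAdj L u v) : v ∈ gridNbrs u := by
  obtain ⟨-, -, -, -, ⟨h₁, h₂ | h₂⟩ | ⟨h₁, h₂ | h₂⟩⟩ := h <;>
    simp only [gridNbrs, Finset.mem_insert, Finset.mem_singleton, Prod.ext_iff] <;> omega

theorem IsGridPath.exists_two_nbrs {L : ℕ} {p : List (ℕ × ℕ)} (hp : IsGridPath L p) {t : ℕ}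
    (ht₀ : 0 < t) (ht : t + 1 < p.length) :
    ∃ a b, a ≠ b ∧ a ∈ gridNbrs p[t] ∧ b ∈ gridNbrs p[t] ∧
      s(p[t], a) ∈ pathEdges p ∧ s(p[t], b) ∈ pathEdges p := by
  obtain ⟨s, rfl⟩ : ∃ s, t = s + 1 := ⟨t - 1, by omega⟩
  have adj := List.isChain_iff_getElem.1 hp.2.2
  refine ⟨p[s], p[s + 1 + 1], fun h => ?_, mem_gridNbrs_of_gridAdj (gridAdj_comm.1 (adj s _)),
    mem_gridNbrs_of_gridAdj (adj (s + 1) ht), Sym2.eq_swap ▸ getElem_mem_pathEdges _,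
    getElem_mem_pathEdges ht⟩
  have := hp.2.1.getElem_inj_iff.1 h
  omega

namespace IsOperatorEDPSet

variable {L : ℕ} {P : Set (List (ℕ × ℕ))} (hP : IsOperatorEDPSet L P)
include hP

theorem eq_of_mem_pathEdges {p q : List (ℕ × ℕ)} (hp : p ∈ P) (hq : q ∈ P) {e : Sym2 (ℕ × ℕ)}
    (hep : e ∈ pathEdges p) (heq : e ∈ pathEdges q) : p = q :=
  by_contra fun hne => hP.2.1 hp hq hne e hep heq

theorem existsUnique_infix {p q : List (ℕ × ℕ)} (hp : p ∈ P) (hq : q <:+: p)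
    (hlen : 2 ≤ q.length) : ∃! r, r ∈ P ∧ q <:+: r := by
  have hedge {r : List (ℕ × ℕ)} (hr : q <:+: r) : s(q[0], q[1]) ∈ pathEdges r :=
    mem_pathEdges_of_infix ((List.pair_infix_of_lt (by omega)).trans hr)
  exact ⟨p, ⟨hp, hq⟩, fun r ⟨hr, hqr⟩ => hP.eq_of_mem_pathEdges hr hp (hedge hqr) (hedge hq)⟩

theorem not_black_of_mem_of_mem {p q : List (ℕ × ℕ)} (hp : p ∈ P) (hq : q ∈ P) (hne : p ≠ q)
    {v : ℕ × ℕ} (hvp : v ∈ p) (hvq : v ∈ q) : ¬Black v := fun hb =>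
  hP.2.2 hp hq hne v (((hP.1 p hp).black_iff_isEndpoint hvp).1 hb)
    (((hP.1 q hq).black_iff_isEndpoint hvq).1 hb)

theorem exists_interior_of_mem_of_mem {p q : List (ℕ × ℕ)} (hp : p ∈ P) (hq : q ∈ P)
    (hne : p ≠ q) {v : ℕ × ℕ} (hvp : v ∈ p) (hvq : v ∈ q) :
    ∃ t, ∃ ht : t + 1 < p.length, 0 < t ∧ p[t] = v := by
  obtain ⟨t, ht, rfl⟩ := List.mem_iff_getElem.1 hvp
  have := mt ((hP.1 p hp).black_getElem_iff ht).2 (hP.not_black_of_mem_of_mem hp hq hne hvp hvq)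
  exact ⟨t, by omega, by omega, rfl⟩

/-- Both paths pass through `v` as interior vertices, giving four distinct neighbours of `v`;
these are all of `gridNbrs v`. -/
theorem mem_pathEdges_or_of_mem_gridNbrs {p q : List (ℕ × ℕ)} (hp : p ∈ P) (hq : q ∈ P)
    (hne : p ≠ q) {v : ℕ × ℕ} (hvp : v ∈ p) (hvq : v ∈ q) {x : ℕ × ℕ} (hx : x ∈ gridNbrs v) :
    s(v, x) ∈ pathEdges p ∨ s(v, x) ∈ pathEdges q := by
  obtain ⟨t, ht, ht₀, rfl⟩ := hP.exists_interior_of_mem_of_mem hp hq hne hvp hvq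
  obtain ⟨s, hs, hs₀, hsv⟩ := hP.exists_interior_of_mem_of_mem hq hp hne.symm hvq hvp
  obtain ⟨a₁, a₂, ha, ha₁, ha₂, hea₁, hea₂⟩ := (hP.1 p hp).1.exists_two_nbrs ht₀ ht
  obtain ⟨b₁, b₂, hb, hb₁, hb₂, heb₁, heb₂⟩ := (hP.1 q hq).1.exists_two_nbrs hs₀ hs
  rw [hsv] at hb₁ hb₂ heb₁ heb₂
  have hab {a b : ℕ × ℕ} (hap : s(p[t], a) ∈ pathEdges p) (hbq : s(p[t], b) ∈ pathEdges q) :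
      a ≠ b := by
    rintro rfl
    exact hP.2.1 hp hq hne _ hap hbq
  have hcard : ({a₁, a₂, b₁, b₂} : Finset (ℕ × ℕ)).card = 4 :=
    Finset.card_eq_four.2 ⟨a₁, a₂, b₁, b₂, ha, hab hea₁ heb₁, hab hea₁ heb₂, hab hea₂ heb₁,
      hab hea₂ heb₂, hb, rfl⟩
  have hall : {a₁, a₂, b₁, b₂} = gridNbrs p[t] :=
    Finset.eq_of_subset_of_card_le (by simp [Finset.insert_subset_iff, *])
      (hcard ▸ Finset.card_le_four)
  rw [← hall] at hx
  simp only [Finset.mem_insert, Finset.mem_singleton] at hx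
  rcases hx with rfl | rfl | rfl | rfl <;> simp [*]

theorem not_black_of_isCrossing {v : ℕ × ℕ} (hv : IsCrossing P v) : ¬Black v := by
  obtain ⟨p, hp, q, hq, hne, hvp, hvq⟩ := hv
  exact hP.not_black_of_mem_of_mem hp hq hne hvp hvq

theorem exists_mem_pathEdges_of_isCrossing {v : ℕ × ℕ} (hv : IsCrossing P v) {x : ℕ × ℕ}
    (hx : x ∈ gridNbrs v) : ∃ r ∈ P, s(v, x) ∈ pathEdges r := by
  obtain ⟨p, hp, q, hq, hne, hvp, hvq⟩ := hv
  rcases hP.mem_pathEdges_or_of_mem_gridNbrs hp hq hne hvp hvq hx with h | h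
  exacts [⟨p, hp, h⟩, ⟨q, hq, h⟩]

theorem not_isCrossing_corner (x y : ℕ) :
    ¬(IsCrossing P (x, y + 1) ∧ IsCrossing P (x + 1, y) ∧ IsCrossing P (x + 1, y + 1)) := by
  rintro ⟨hu, hv, hw⟩
  have hb : Black (x, y) := by
    have := hP.not_black_of_isCrossing hu
    have := hP.not_black_of_isCrossing hv
    have := hP.not_black_of_isCrossing hw
    simp only [Black, Nat.even_add_one] at *
    tauto
  obtain ⟨p, hp, hep⟩ := hP.exists_mem_pathEdges_of_isCrossing hu (x := (x, y)) (by simp [gridNbrs])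
  obtain ⟨q, hq, heq⟩ := hP.exists_mem_pathEdges_of_isCrossing hv (x := (x, y)) (by simp [gridNbrs])
  rw [Sym2.eq_swap] at hep heq
  by_cases hpq : p = q
  · subst hpq
    obtain ⟨t, ht, ht₀, htb⟩ :=
      exists_interior_of_mem_pathEdges (hP.1 p hp).1.2.1 hep heq (by simp)
    have := ((hP.1 p hp).black_getElem_iff (by omega)).1 (htb ▸ hb)
    omega
  · exact hP.not_black_of_mem_of_mem hp hq hpq (mem_of_mem_pathEdges hep)
      (mem_of_mem_pathEdges heq) hb

end IsOperatorEDPSet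

def leftEdge (v : ℕ × ℕ) : Sym2 (ℕ × ℕ) := s((v.1 - 1, v.2), v)

def SameOwner (P : Set (List (ℕ × ℕ))) (e e' : Sym2 (ℕ × ℕ)) : Prop :=
  ∃ r ∈ P, e ∈ pathEdges r ∧ e' ∈ pathEdges r

open Classical in
/-- Moves a reference bit from `u` to a neighbour `v`: the colour of the path owning `s(u, v)`,
read off at `u` relative to `b`, is kept when it is read off at `v`. -/
noncomputable def transportBit (P : Set (List (ℕ × ℕ))) (u v : ℕ × ℕ) (b : Bool) : Bool :=
  b ^^ decide (SameOwner P (leftEdge u) s(u, v)) ^^ decide (SameOwner P (leftEdge v) s(u, v))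

open Classical in
noncomputable def crossingBit (P : Set (List (ℕ × ℕ))) (v : ℕ × ℕ) : Bool :=
  if h : 0 < v.1 ∧ IsCrossing P (v.1 - 1, v.2) then
    transportBit P (v.1 - 1, v.2) v (crossingBit P (v.1 - 1, v.2))
  else if h' : 0 < v.2 ∧ IsCrossing P (v.1, v.2 - 1) then
    transportBit P (v.1, v.2 - 1) v (crossingBit P (v.1, v.2 - 1))
  else false
termination_by v.1 + v.2
decreasing_by all_goals omega

noncomputable def passColour (P : Set (List (ℕ × ℕ))) (r : List (ℕ × ℕ)) (v : ℕ × ℕ) : Bool :=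
  crossingBit P v ^^ decide (leftEdge v ∈ pathEdges r)

namespace IsOperatorEDPSet

variable {L : ℕ} {P : Set (List (ℕ × ℕ))} (hP : IsOperatorEDPSet L P)
include hP

theorem sameOwner_iff {r : List (ℕ × ℕ)} (hr : r ∈ P) {e e' : Sym2 (ℕ × ℕ)}
    (he : e ∈ pathEdges r) : SameOwner P e' e ↔ e' ∈ pathEdges r :=
  ⟨fun ⟨_, hr', he', hre⟩ => hP.eq_of_mem_pathEdges hr' hr hre he ▸ he', fun h => ⟨r, hr, h, he⟩⟩

theorem passColour_ne {p q : List (ℕ × ℕ)} (hp : p ∈ P) (hq : q ∈ P) (hne : p ≠ q)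
    {v : ℕ × ℕ} (hvp : v ∈ p) (hvq : v ∈ q) : passColour P p v ≠ passColour P q v := by
  have hx : (v.1 - 1, v.2) ∈ gridNbrs v := by simp [gridNbrs]
  have hdisj := hP.2.1 hp hq hne (leftEdge v)
  simp only [passColour, ne_eq, Bool.xor_right_inj, decide_eq_decide]
  rcases hP.mem_pathEdges_or_of_mem_gridNbrs hp hq hne hvp hvq hx with h | h <;>
    rw [Sym2.eq_swap] at h <;> tauto

theorem passColour_eq_of_transportBit {p : List (ℕ × ℕ)} (hp : p ∈ P) {u v : ℕ × ℕ}
    (he : s(u, v) ∈ pathEdges p) (h : crossingBit P v = transportBit P u v (crossingBit P u)) :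
    passColour P p u = passColour P p v := by
  rw [passColour, passColour, h, transportBit]
  simp only [hP.sameOwner_iff hp he, Bool.xor_assoc, Bool.xor_self, Bool.xor_false]

theorem passColour_right {p : List (ℕ × ℕ)} (hp : p ∈ P) {a b : ℕ} (hu : IsCrossing P (a, b))
    (he : s((a, b), (a + 1, b)) ∈ pathEdges p) :
    passColour P p (a, b) = passColour P p (a + 1, b) := by
  refine hP.passColour_eq_of_transportBit hp he ?_
  rw [crossingBit, dif_pos ⟨a.succ_pos, hu⟩]
  rfl

theorem passColour_up {p : List (ℕ × ℕ)} (hp : p ∈ P) {a b : ℕ} (hu : IsCrossing P (a, b))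
    (hw : IsCrossing P (a, b + 1)) (he : s((a, b), (a, b + 1)) ∈ pathEdges p) :
    passColour P p (a, b) = passColour P p (a, b + 1) := by
  refine hP.passColour_eq_of_transportBit hp he ?_
  have hleft : ¬(0 < a ∧ IsCrossing P (a - 1, b + 1)) := by
    rintro ⟨ha, hl⟩
    obtain ⟨c, rfl⟩ : ∃ c, a = c + 1 := ⟨a - 1, by omega⟩
    exact hP.not_isCrossing_corner c b ⟨hl, hu, hw⟩
  rw [crossingBit, dif_neg hleft, dif_pos ⟨b.succ_pos, hu⟩]
  rfl

theorem passColour_eq_of_gridAdj {p : List (ℕ × ℕ)} (hp : p ∈ P) {u w : ℕ × ℕ}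
    (hu : IsCrossing P u) (hw : IsCrossing P w) (hadj : GridAdj L u w)
    (he : s(u, w) ∈ pathEdges p) : passColour P p u = passColour P p w := by
  obtain ⟨a, b⟩ := u
  obtain ⟨c, d⟩ := w
  obtain ⟨-, -, -, -, ⟨h₁, h₂ | h₂⟩ | ⟨h₁, h₂ | h₂⟩⟩ := hadj <;> dsimp only at h₁ h₂ <;> subst h₁ h₂
  · exact hP.passColour_up hp hu hw he
  · exact (hP.passColour_up hp hw hu (Sym2.eq_swap ▸ he)).symm
  · exact hP.passColour_right hp hu he
  · exact (hP.passColour_right hp hw (Sym2.eq_swap ▸ he)).symm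

end IsOperatorEDPSet

open Classical in
noncomputable def edgeLabel (P : Set (List (ℕ × ℕ))) (p : List (ℕ × ℕ)) (i : ℕ) : Bool :=
  if IsCrossing P (p.getI i) then passColour P p (p.getI i) else passColour P p (p.getI (i + 1))

def fragments (P : Set (List (ℕ × ℕ))) (b : Bool) : Set (List (ℕ × ℕ)) :=
  {q | ∃ p ∈ P, ∃ i, i + 1 < p.length ∧ edgeLabel P p i = b ∧ q = p.run (edgeLabel P p) i}

namespace IsOperatorEDPSet

variable {L : ℕ} {P : Set (List (ℕ × ℕ))} (hP : IsOperatorEDPSet L P)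
include hP

theorem edgeLabel_eq_passColour {p : List (ℕ × ℕ)} (hp : p ∈ P) {i : ℕ} (hi : i + 1 < p.length)
    {v : ℕ × ℕ} (hv : p[i] = v ∨ p[i + 1] = v) (hcr : IsCrossing P v) :
    edgeLabel P p i = passColour P p v := by
  have hadj : GridAdj L p[i] p[i + 1] := List.isChain_iff_getElem.1 (hP.1 p hp).1.2.2 i hi
  rw [edgeLabel, List.getI_eq_getElem _ (by omega), List.getI_eq_getElem _ hi]
  split_ifs with h <;> rcases hv with rfl | rfl
  · rfl
  · exact hP.passColour_eq_of_gridAdj hp h hcr hadj (getElem_mem_pathEdges hi)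
  · exact absurd hcr h
  · rfl

theorem edgeLabel_eq_passColour_of_mem_run {p : List (ℕ × ℕ)} (hp : p ∈ P) {i : ℕ}
    (hi : i + 1 < p.length) {v : ℕ × ℕ} (hv : v ∈ p.run (edgeLabel P p) i)
    (hcr : IsCrossing P v) : edgeLabel P p i = passColour P p v := by
  obtain ⟨j, hj, hji, hvj⟩ := List.exists_edge_of_mem_run hi hv
  rw [← hji, hP.edgeLabel_eq_passColour hp hj hvj hcr]

theorem isVDPSet_fragments (b : Bool) : IsVDPSet (fragments P b) := by
  rintro _ ⟨p, hp, i, hi, rfl, rfl⟩ _ ⟨p', hp', i', hi', hb, rfl⟩ hne v hv hv'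
  by_cases hpp : p = p'
  · subst hpp
    exact hne (List.run_eq_of_mem_of_mem (hP.1 p hp).1.2.1 hi hi' hb.symm hv hv')
  · have hvp := List.run_infix.subset hv
    have hvp' := List.run_infix.subset hv'
    have hcr : IsCrossing P v := ⟨p, hp, p', hp', hpp, hvp, hvp'⟩
    refine hP.passColour_ne hp hp' hpp hvp hvp' ?_
    rw [← hP.edgeLabel_eq_passColour_of_mem_run hp hi hv hcr,
      ← hP.edgeLabel_eq_passColour_of_mem_run hp' hi' hv' hcr, hb]

end IsOperatorEDPSet

theorem exists_mem_fragments {P : Set (List (ℕ × ℕ))} {p : List (ℕ × ℕ)} (hp : p ∈ P)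
    {e : Sym2 (ℕ × ℕ)} (he : e ∈ pathEdges p) :
    ∃ b, ∃ q ∈ fragments P b, q <:+: p ∧ e ∈ pathEdges q := by
  obtain ⟨i, hi, rfl⟩ := mem_pathEdges_iff.1 he
  exact ⟨_, _, ⟨p, hp, i, hi, rfl, rfl⟩, List.run_infix,
    mem_pathEdges_of_infix (List.pair_infix_run hi)⟩

/-- **fragmentation.** Every operator EDP set `P` in the grid
graph can be fragmented into two sets `P₁`, `P₂` of segments (subpaths) such
that each segment is a subpath of exactly one path of `P`, every edge of every
path of `P` is covered by a segment of that path, and both `P₁` and `P₂` are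
vertex-disjoint path sets.  If `P` itself is vertex-disjoint, one may take
`P₁ = P` and `P₂ = ∅`. -/
theorem operator_edp_fragmentation (L : ℕ) (P : Set (List (ℕ × ℕ)))
    (hP : IsOperatorEDPSet L P) :
    ∃ P₁ P₂ : Set (List (ℕ × ℕ)),
      IsVDPSet P₁ ∧ IsVDPSet P₂ ∧
      (∀ q ∈ P₁ ∪ P₂, 2 ≤ q.length ∧ ∃! p, p ∈ P ∧ q <:+: p) ∧
      (∀ p ∈ P, ∀ e ∈ pathEdges p, ∃ q ∈ P₁ ∪ P₂, q <:+: p ∧ e ∈ pathEdges q) ∧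
      (IsVDPSet P → P₁ = P ∧ P₂ = ∅) := by
  by_cases hvdp : IsVDPSet P
  · refine ⟨P, ∅, hvdp, Set.pairwise_empty _, ?_, ?_, fun _ => ⟨rfl, rfl⟩⟩ <;>
      simp only [Set.union_empty]
    · exact fun q hq => ⟨(hP.1 q hq).two_le_length,
        hP.existsUnique_infix hq (List.infix_refl q) (hP.1 q hq).two_le_length⟩
    · exact fun p hp e he => ⟨p, hp, List.infix_refl p, he⟩
  · refine ⟨fragments P false, fragments P true, hP.isVDPSet_fragments false,
      hP.isVDPSet_fragments true, ?_, ?_, fun h => absurd h hvdp⟩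
    · rintro q (⟨p, hp, i, hi, -, rfl⟩ | ⟨p, hp, i, hi, -, rfl⟩) <;>
        exact ⟨List.two_le_length_run hi,
          hP.existsUnique_infix hp List.run_infix (List.two_le_length_run hi)⟩
    · intro p hp e he
      obtain ⟨b, q, hq, hqp, heq⟩ := exists_mem_fragments hp he
      refine ⟨q, ?_, hqp, heq⟩
      cases b
      exacts [Or.inl hq, Or.inr hq]
end

section
/- Consider n data qubits at the black vertices (2i,2j) of a 2√n × 2√n region and any set T of n/2 disjoint control–target pairs among them. Assign to each pair (v,u) with v=(v_x,v_y), u=(u_x,u_y), the L-shaped operator path with key vertices v, (v_x,v_y−1), (u_x−1,v_y−1), (u_x−1,u_y), u. Then each such path shares an edge with at most 2(√n − 1) of the other paths. -/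
/-!
With all qubits at even coordinates, the end edges of a path lie on even rows and columns and its
interior segments on odd ones, so two paths can only share an edge of the same kind: then their
controls lie in the same row or their targets in the same column. Controls are distinct, so
besides `t` a row holds at most `m - 1` of them (one per even column), and likewise for targets.
-/

/-- The set of (undirected) grid edges of the L-shaped operator path with key
vertices `v, (v₁, v₂-1), (u₁-1, v₂-1), (u₁-1, u₂), u`: a vertical end edge at
the control `v`, a horizontal interior segment along row `v₂ - 1`, a vertical
interior segment along column `u₁ - 1`, and a horizontal end edge at the
target `u`. -/
def LPathEdges (v u : ℕ × ℕ) : Set (Sym2 (ℕ × ℕ)) :=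
  {s(v, (v.1, v.2 - 1))} ∪
    {e | ∃ x : ℕ, min v.1 (u.1 - 1) ≤ x ∧ x + 1 ≤ max v.1 (u.1 - 1) ∧
      e = s((x, v.2 - 1), (x + 1, v.2 - 1))} ∪
    {e | ∃ y : ℕ, min (v.2 - 1) u.2 ≤ y ∧ y + 1 ≤ max (v.2 - 1) u.2 ∧
      e = s((u.1 - 1, y), (u.1 - 1, y + 1))} ∪
    {s((u.1 - 1, u.2), u)}

theorem snd_eq_or_fst_eq_of_lPathEdges_inter_nonempty {v u v' u' : ℕ × ℕ}
    (hv : Even v.1 ∧ Even v.2) (hu : Even u.1 ∧ Even u.2)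
    (hv' : Even v'.1 ∧ Even v'.2) (hu' : Even u'.1 ∧ Even u'.2)
    (hv₀ : v.2 ≠ 0) (hu₀ : u.1 ≠ 0) (hv₀' : v'.2 ≠ 0) (hu₀' : u'.1 ≠ 0)
    (h : (LPathEdges v u ∩ LPathEdges v' u').Nonempty) :
    v.2 = v'.2 ∨ u.1 = u'.1 := by
  obtain ⟨a, b⟩ := v
  obtain ⟨c, d⟩ := u
  obtain ⟨a', b'⟩ := v'
  obtain ⟨c', d'⟩ := u'
  simp only [Nat.even_iff] at hv hu hv' hu' hv₀ hu₀ hv₀' hu₀' ⊢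
  obtain ⟨e, he, he'⟩ := h
  simp only [LPathEdges, Set.mem_union, Set.mem_singleton_iff, Set.mem_ofPred_eq] at he he'
  rcases he with (((rfl | ⟨x, -, -, rfl⟩) | ⟨y, -, -, rfl⟩) | rfl) <;>
    rcases he' with (((heq | ⟨x', -, -, heq⟩) | ⟨y', -, -, heq⟩) | heq) <;>
    · simp only [Sym2.eq_iff, Prod.mk.injEq] at heq
      omega

theorem card_filter_even_Icc_two (m : ℕ) : ((Finset.Icc 2 (2 * m)).filter Even).card = m := by
  have : (Finset.Icc 2 (2 * m)).filter Even =
      (Finset.Icc 1 m).map ⟨(2 * ·), mul_right_injective₀ two_ne_zero⟩ := by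
    ext x
    simp only [Finset.mem_filter, Finset.mem_Icc, Finset.mem_map, Function.Embedding.coeFn_mk,
      Nat.even_iff]
    constructor
    · rintro ⟨hx, hev⟩
      exact ⟨x / 2, by omega, by omega⟩
    · rintro ⟨y, hy, rfl⟩
      omega
  rw [this, Finset.card_map, Nat.card_Icc, Nat.add_sub_cancel]

theorem card_filter_erase_eq_le {α : Type*} [DecidableEq α] {T : Finset α} {m : ℕ}
    (p q : α → ℕ) (hpq : ∀ a ∈ T, ∀ b ∈ T, p a = p b → q a = q b → a = b)
    (hq : ∀ a ∈ T, Even (q a) ∧ q a ∈ Finset.Icc 2 (2 * m)) {t : α} (ht : t ∈ T) :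
    ((T.erase t).filter (fun a => p a = p t)).card ≤ m - 1 := by
  have hqt : q t ∈ (Finset.Icc 2 (2 * m)).filter Even := Finset.mem_filter.2 (hq t ht).symm
  calc _ ≤ (((Finset.Icc 2 (2 * m)).filter Even).erase (q t)).card := by
        refine Finset.card_le_card_of_injOn q (fun a ha => ?_) (fun a ha b hb hab => ?_)
        · obtain ⟨⟨hat, haT⟩, hpa⟩ := Finset.mem_filter.1 ha |>.imp_left Finset.mem_erase.1
          refine Finset.mem_erase.2 ⟨fun hqa => hat (hpq a haT t ht hpa hqa), ?_⟩
          exact Finset.mem_filter.2 (hq a haT).symm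
        · obtain ⟨⟨-, haT⟩, hpa⟩ := Finset.mem_filter.1 ha |>.imp_left Finset.mem_erase.1
          obtain ⟨⟨-, hbT⟩, hpb⟩ := Finset.mem_filter.1 hb |>.imp_left Finset.mem_erase.1
          exact hpq a haT b hbT (hpa.trans hpb.symm) hab
    _ = m - 1 := by rw [Finset.card_erase_of_mem hqt, card_filter_even_Icc_two]

theorem lpath_conflicts_bound_general (m : ℕ)
    (T : Finset ((ℕ × ℕ) × (ℕ × ℕ)))
    (hcoords : ∀ t ∈ T,
      (Even t.1.1 ∧ Even t.1.2 ∧ Even t.2.1 ∧ Even t.2.2) ∧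
        t.1.1 ∈ Finset.Icc 2 (2 * m) ∧ t.1.2 ∈ Finset.Icc 2 (2 * m) ∧
        t.2.1 ∈ Finset.Icc 2 (2 * m) ∧ t.2.2 ∈ Finset.Icc 2 (2 * m))
    (hdisj : ∀ t ∈ T, ∀ t' ∈ T, t ≠ t' →
      t.1 ≠ t'.1 ∧ t.2 ≠ t'.2 ∧ t.1 ≠ t'.2 ∧ t.2 ≠ t'.1) :
    ∀ t ∈ T,
      {t' | t' ∈ T ∧ t' ≠ t ∧
        (LPathEdges t.1 t.2 ∩ LPathEdges t'.1 t'.2).Nonempty}.ncard ≤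
        2 * (m - 1) := by
  intro t ht
  set sameRow := (T.erase t).filter (fun a => a.1.2 = t.1.2)
  set sameCol := (T.erase t).filter (fun a => a.2.1 = t.2.1)
  have hsub : {t' | t' ∈ T ∧ t' ≠ t ∧ (LPathEdges t.1 t.2 ∩ LPathEdges t'.1 t'.2).Nonempty} ⊆
      ↑(sameRow ∪ sameCol) := by
    rintro t' ⟨ht', hne, hmeet⟩
    obtain ⟨⟨h₁, h₂, h₃, h₄⟩, -, hv, hu, -⟩ := hcoords t ht
    obtain ⟨⟨h₁', h₂', h₃', h₄'⟩, -, hv', hu', -⟩ := hcoords t' ht'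
    simp only [Finset.mem_Icc] at hv hu hv' hu'
    have := snd_eq_or_fst_eq_of_lPathEdges_inter_nonempty ⟨h₁, h₂⟩ ⟨h₃, h₄⟩ ⟨h₁', h₂'⟩ ⟨h₃', h₄'⟩
      (by omega) (by omega) (by omega) (by omega) hmeet
    simp only [sameRow, sameCol, Finset.coe_union, Finset.coe_filter, Finset.mem_erase]
    exact this.imp (⟨⟨hne, ht'⟩, ·.symm⟩) (⟨⟨hne, ht'⟩, ·.symm⟩)
  have hrow : sameRow.card ≤ m - 1 := card_filter_erase_eq_le (fun a => a.1.2) (fun a => a.1.1)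
    (fun a ha b hb h₂ h₁ => by_contra fun hab => (hdisj a ha b hb hab).1 (Prod.ext h₁ h₂))
    (fun a ha => ⟨(hcoords a ha).1.1, (hcoords a ha).2.1⟩) ht
  have hcol : sameCol.card ≤ m - 1 := card_filter_erase_eq_le (fun a => a.2.1) (fun a => a.2.2)
    (fun a ha b hb h₁ h₂ => by_contra fun hab => (hdisj a ha b hb hab).2.1 (Prod.ext h₁ h₂))
    (fun a ha => ⟨(hcoords a ha).1.2.2.2, (hcoords a ha).2.2.2.2⟩) ht
  calc _ ≤ (sameRow ∪ sameCol).card :=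
        (Set.ncard_le_ncard hsub (Finset.finite_toSet _)).trans_eq (Set.ncard_coe_finset _)
    _ ≤ sameRow.card + sameCol.card := Finset.card_union_le _ _
    _ ≤ 2 * (m - 1) := by omega

/-- Consider `n` data qubits at the black vertices `(2i, 2j)`
of a `2√n × 2√n` region and a set `T` of `n/2` disjoint control–target pairs
among them.  Assigning to each pair the L-shaped operator path above, each such
path shares an edge with at most `2(√n - 1)` of the other paths. -/
theorem lpath_conflicts_bound (n m : ℕ) (hm : m * m = n)
    (T : Finset ((ℕ × ℕ) × (ℕ × ℕ)))
    (hcard : 2 * T.card = n)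
    (hcoords : ∀ t ∈ T,
      (Even t.1.1 ∧ Even t.1.2 ∧ Even t.2.1 ∧ Even t.2.2) ∧
        t.1.1 ∈ Finset.Icc 2 (2 * m) ∧ t.1.2 ∈ Finset.Icc 2 (2 * m) ∧
        t.2.1 ∈ Finset.Icc 2 (2 * m) ∧ t.2.2 ∈ Finset.Icc 2 (2 * m))
    (hself : ∀ t ∈ T, t.1 ≠ t.2)
    (hdisj : ∀ t ∈ T, ∀ t' ∈ T, t ≠ t' →
      t.1 ≠ t'.1 ∧ t.2 ≠ t'.2 ∧ t.1 ≠ t'.2 ∧ t.2 ≠ t'.1) :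
    ∀ t ∈ T,
      {t' | t' ∈ T ∧ t' ≠ t ∧
        (LPathEdges t.1 t.2 ∩ LPathEdges t'.1 t'.2).Nonempty}.ncard ≤
        2 * (m - 1) :=
  lpath_conflicts_bound_general m T hcoords hdisj
end
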